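/- For a real q with 0 < q < 1 and integers m₁, m₂, m₃, the 3-bracket of q-deformed Witt generators l_m (acting on Laurent monomials by l_m(t^k) = −[k]_q t^{m+k}) defined as the weighted alternating sum [l_{m₁}, l_{m₂}, l_{m₃}] := Σ_{σ ∈ S₃} sgn(σ) q^{(2−1)m_{σ(1)} + (2−2)m_{σ(2)} + (2−3)m_{σ(3)}} l_{m_{σ(1)}} l_{m_{σ(2)}} l_{m_{σ(3)}} equals (q−1)·q^{−(m₁+m₂+m₃)}·([m₁]_q − [m₂]_q)([m₁]_q − [m₃]_q)([m₂]_q − [m₃]_q)·l_{m₁+m₂+m₃}, where [n]_q = (1−q^n)/(1−q). -/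

import Mathlib

/-- The q-deformed number `[n]_q = (1 - q^n)/(1 - q)`, integer exponent. -/
noncomputable def qNum (q : ℝ) (n : ℤ) : ℝ := (1 - q ^ n) / (1 - q)

/-- The q-deformed Witt generator `l_m` acting on Laurent polynomials
(realized as `ℤ →₀ ℝ`), sending `t^k` to `-[k]_q t^{m+k}`. -/
noncomputable def lq (q : ℝ) (m : ℤ) (f : ℤ →₀ ℝ) : ℤ →₀ ℝ :=
  f.sum fun k c => Finsupp.single (m + k) (-(qNum q k) * c)

/-!
Both sides are additive in `f`, so it suffices to take `f = x t^k`. Every composite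
`l_a l_b l_c` sends `t^k` to a multiple of the same monomial `t^(a+b+c+k)`, and the weight
is just `q^(m_σ(1) - m_σ(3))`. The claim becomes an identity between the
coefficients, which after clearing the denominators `1 - q` is a Laurent polynomial identity
in `q^k` and the `q^(m_i)`.
-/

open Equiv Finset

theorem Equiv.Perm.sum_sign_mul_fin_three {R : Type*} [CommRing R]
    (F : Fin 3 → Fin 3 → Fin 3 → R) :
    ∑ σ : Perm (Fin 3), ((Perm.sign σ : ℤ) : R) * F (σ 0) (σ 1) (σ 2) =
      F 0 1 2 - F 1 0 2 - F 2 1 0 - F 0 2 1 + F 1 2 0 + F 2 0 1 := by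
  rw [show (univ : Finset (Perm (Fin 3))) =
    {1, swap 0 1, swap 0 2, swap 1 2, swap 0 1 * swap 0 2, swap 0 2 * swap 0 1} from by decide]
  rw [sum_insert (by decide), sum_insert (by decide), sum_insert (by decide),
    sum_insert (by decide), sum_insert (by decide), sum_singleton]
  simp only [sign_one, sign_mul, sign_swap', coe_one, coe_mul, Function.comp_apply, id_eq,
    swap_apply_left, swap_apply_right, swap_apply_of_ne_of_ne, ne_eq, Fin.reduceEq,
    not_false_eq_true, ↓reduceIte]
  push_cast
  ring

theorem Equiv.Perm.add_add_comp_fin_three {M : Type*} [AddCommMonoid M] (σ : Perm (Fin 3))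
    (m : Fin 3 → M) :
    m (σ 0) + m (σ 1) + m (σ 2) = m 0 + m 1 + m 2 := by
  simpa [Fin.sum_univ_three] using σ.sum_comp univ m (by simp)

lemma lq_zero (q : ℝ) (m : ℤ) : lq q m 0 = 0 :=
  Finsupp.sum_zero_index

lemma lq_add (q : ℝ) (m : ℤ) (f g : ℤ →₀ ℝ) : lq q m (f + g) = lq q m f + lq q m g :=
  Finsupp.sum_add_index' (fun _ => by rw [mul_zero, Finsupp.single_zero])
    (fun _ _ _ => by rw [mul_add, Finsupp.single_add])

lemma lq_single (q : ℝ) (m k : ℤ) (x : ℝ) :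
    lq q m (Finsupp.single k x) = Finsupp.single (m + k) (-qNum q k * x) :=
  Finsupp.sum_single_index (by rw [mul_zero, Finsupp.single_zero])

lemma lq_lq_lq_single (q : ℝ) (a b c k : ℤ) (x : ℝ) :
    lq q a (lq q b (lq q c (Finsupp.single k x))) = Finsupp.single (a + b + c + k)
      (-(qNum q k * qNum q (c + k) * qNum q (b + c + k)) * x) := by
  simp only [lq_single, add_assoc]
  congr 1
  ring

lemma sum_sign_zpow_mul_qNum {q : ℝ} (hq₀ : q ≠ 0) (hq₁ : q ≠ 1) (m : Fin 3 → ℤ)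
    (k : ℤ) :
    ∑ σ : Perm (Fin 3), ((Perm.sign σ : ℤ) : ℝ) * q ^ (m (σ 0) - m (σ 2)) *
        qNum q k * qNum q (m (σ 2) + k) * qNum q (m (σ 1) + m (σ 2) + k) =
      (q - 1) * q ^ (-(m 0 + m 1 + m 2)) *
        ((qNum q (m 0) - qNum q (m 1)) * (qNum q (m 0) - qNum q (m 2)) *
          (qNum q (m 1) - qNum q (m 2))) * qNum q k := by
  have h1q : 1 - q ≠ 0 := sub_ne_zero.mpr hq₁.symm
  simp only [mul_assoc]
  rw [Perm.sum_sign_mul_fin_three fun i j l =>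
    q ^ (m i - m l) * (qNum q k * (qNum q (m l + k) * qNum q (m j + m l + k)))]
  simp only [qNum, zpow_sub₀ hq₀, zpow_add₀ hq₀, zpow_neg]
  field_simp
  ring

theorem q_witt_three_bracket (q : ℝ) (hq0 : 0 < q) (hq1 : q < 1) (m : Fin 3 → ℤ)
    (f : ℤ →₀ ℝ) :
    (∑ σ : Equiv.Perm (Fin 3),
        (((Equiv.Perm.sign σ : ℤ) : ℝ) * q ^ ((2 - 1) * m (σ 0) + (2 - 2) * m (σ 1) + (2 - 3) * m (σ 2))) •
          lq q (m (σ 0)) (lq q (m (σ 1)) (lq q (m (σ 2)) f))) =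
      ((q - 1) * q ^ (-(m 0 + m 1 + m 2)) *
          ((qNum q (m 0) - qNum q (m 1)) * (qNum q (m 0) - qNum q (m 2)) *
            (qNum q (m 1) - qNum q (m 2)))) •
        lq q (m 0 + m 1 + m 2) f := by
  induction f using Finsupp.induction_linear with
  | zero => simp only [lq_zero, smul_zero, sum_const_zero]
  | add f g hf hg => simp only [lq_add, smul_add, sum_add_distrib, hf, hg]
  | single k x =>
    have weight (a b c : ℤ) : (2 - 1) * a + (2 - 2) * b + (2 - 3) * c = a - c := by ring
    simp only [lq_lq_lq_single, Perm.add_add_comp_fin_three, weight]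
    simp only [lq_single, Finsupp.smul_single, ← Finsupp.single_finsetSum, smul_eq_mul]
    congr 1
    simp only [mul_neg, sum_neg_distrib, ← mul_assoc, ← sum_mul]
    rw [sum_sign_zpow_mul_qNum hq0.ne' hq1.ne]
    ring
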